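/- Let k ≥ 2 and let (θ_n)_{n≥1} be holomorphic automorphisms of ℂ^k such that for every integer m ≥ 1 one has Σ_{n≥1} sup_{‖z‖≤m} ‖θ_n(z) − z‖ < ∞. Then the compositions F_n = θ_1 ∘ θ_2 ∘ ⋯ ∘ θ_n converge uniformly on compact subsets of ℂ^k to an injective holomorphic map F : ℂ^k → ℂ^k. -/

import Mathlib

/-- `thcomp θ n = θ_0 ∘ θ_1 ∘ ⋯ ∘ θ_n` (the sequence is 0-indexed). -/
noncomputable def thcomp {k : ℕ} (θ : ℕ → ((Fin k → ℂ) ≃ (Fin k → ℂ))) :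
    ℕ → (Fin k → ℂ) → (Fin k → ℂ)
  | 0 => ⇑(θ 0)
  | n + 1 => thcomp θ n ∘ ⇑(θ (n + 1))

/-!
Write `Φₙ = θ₀ ∘ ⋯ ∘ θₙ₋₁`. Summability of the displacements makes every finite tail
`θₐ ∘ ⋯ ∘ θ_b` uniformly close to the identity on a given ball as soon as `a` is large,
independently of `b`. Hence the `Φₙ` are eventually uniformly bounded on balls, so by the Cauchy
estimates eventually uniformly Lipschitz on slightly smaller balls, and `Φₙ₊ₑ = Φₙ ∘ (tail)` is
uniformly close to `Φₙ`: the sequence is uniformly Cauchy on bounded sets. The Cauchy estimates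
also make the derivatives converge, so the limit `Φ` is holomorphic. For injectivity,
`Φ = Φₐ ∘ Ψₐ` with `Φₐ` injective and `Ψₐ` the limit of the tails from `a`, which for large `a`
moves `z` and `w` by less than a third of `‖z - w‖`.
-/

open Metric Set Filter Topology

section Cauchy

variable {X E : Type*} [NormedAddCommGroup X] [NormedSpace ℂ X]
  [NormedAddCommGroup E] [NormedSpace ℂ E]

theorem norm_fderiv_le_of_forall_mem_closedBall_norm_le {f : X → E} (hf : Differentiable ℂ f)
    {z : X} {ρ ε : ℝ} (hρ : 0 < ρ) (hε : ∀ x ∈ closedBall z ρ, ‖f x‖ ≤ ε) :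
    ‖fderiv ℂ f z‖ ≤ ε / ρ := by
  have hε0 : 0 ≤ ε := (norm_nonneg _).trans (hε z (mem_closedBall_self hρ.le))
  refine ContinuousLinearMap.opNorm_le_bound _ (by positivity) fun v => ?_
  rcases eq_or_ne v 0 with rfl | hv
  · simp
  have hv0 : 0 < ‖v‖ := norm_pos_iff.2 hv
  set g : ℂ → E := fun t => f (z + t • v)
  have hg : Differentiable ℂ g := hf.comp ((differentiable_id.smul_const v).const_add z)
  have hg' : HasDerivAt g (fderiv ℂ f z v) 0 := by
    have hline : HasDerivAt (fun t : ℂ => z + t • v) v 0 := by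
      simpa using ((hasDerivAt_id (0 : ℂ)).smul_const v).const_add z
    have hfz : HasFDerivAt f (fderiv ℂ f z) (z + (0 : ℂ) • v) := by
      simpa using (hf z).hasFDerivAt
    exact hfz.comp_hasDerivAt 0 hline
  have hsphere : ∀ t ∈ sphere (0 : ℂ) (ρ / ‖v‖), ‖g t‖ ≤ ε := by
    intro t ht
    refine hε _ ?_
    rw [mem_sphere_zero_iff_norm] at ht
    rw [mem_closedBall, dist_eq_norm, add_sub_cancel_left, norm_smul, ht,
      div_mul_cancel₀ _ hv0.ne']
  have := Complex.norm_deriv_le_of_forall_mem_sphere_norm_le (by positivity)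
    hg.diffContOnCl hsphere
  rw [hg'.deriv] at this
  calc ‖fderiv ℂ f z v‖ ≤ ε / (ρ / ‖v‖) := this
    _ = ε / ρ * ‖v‖ := by field_simp

theorem norm_sub_le_of_forall_mem_closedBall_norm_le {f : X → E} (hf : Differentiable ℂ f)
    {c : X} {r R M : ℝ} (hrR : r < R) (hM : ∀ x ∈ closedBall c R, ‖f x‖ ≤ M) {z w : X}
    (hz : z ∈ closedBall c r) (hw : w ∈ closedBall c r) :
    ‖f z - f w‖ ≤ M / (R - r) * ‖z - w‖ := by
  refine (convex_closedBall c r).norm_image_sub_le_of_norm_fderiv_le (fun x _ => hf x)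
    (fun x hx => norm_fderiv_le_of_forall_mem_closedBall_norm_le hf (sub_pos.2 hrR)
      fun y hy => hM y ?_) hw hz
  calc dist y c ≤ dist y x + dist x c := dist_triangle _ _ _
    _ ≤ (R - r) + r := add_le_add hy hx
    _ = R := by ring

theorem differentiable_of_tendstoUniformlyOn_closedBall [CompleteSpace E] {f : ℕ → X → E}
    {F : X → E} (hf : ∀ n, Differentiable ℂ (f n))
    (hF : ∀ z r, TendstoUniformlyOn f F atTop (closedBall z r)) : Differentiable ℂ F := by
  intro z
  have hCauchy : UniformCauchySeqOn (fun n => fderiv ℂ (f n)) atTop (ball z 1) := by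
    rw [Metric.uniformCauchySeqOn_iff]
    intro ε hε
    obtain ⟨N, hN⟩ := Metric.uniformCauchySeqOn_iff.1 (hF z 2).uniformCauchySeqOn (ε / 2)
      (half_pos hε)
    refine ⟨N, fun m hm n hn x hx => ?_⟩
    rw [dist_eq_norm, ← fderiv_sub (hf m x) (hf n x)]
    refine (norm_fderiv_le_of_forall_mem_closedBall_norm_le (ε := ε / 2) ((hf m).sub (hf n))
      one_pos fun y hy => ?_).trans_lt (by linarith)
    rw [Pi.sub_apply, ← dist_eq_norm]
    refine (hN m hm n hn y ?_).le
    rw [mem_ball] at hx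
    rw [mem_closedBall] at hy ⊢
    linarith [dist_triangle y x z]
  have hlim : ∀ x ∈ ball z 1, Tendsto (fun n => fderiv ℂ (f n) x) atTop
      (𝓝 (limUnder atTop fun n => fderiv ℂ (f n) x)) :=
    fun x hx => (hCauchy.cauchySeq hx).tendsto_limUnder
  exact (hasFDerivAt_of_tendstoUniformlyOn isOpen_ball
    (hCauchy.tendstoUniformlyOn_of_tendsto hlim) (fun n x _ => (hf n x).hasFDerivAt)
    (fun x hx => (hF z 1).tendsto_at (ball_subset_closedBall hx))
    (mem_ball_self one_pos)).differentiableAt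

end Cauchy

section Composition

variable {X : Type*}

-- `partialComp θ n = θ 0 ∘ ⋯ ∘ θ (n - 1)`, one map fewer than `thcomp θ n`
def partialComp (θ : ℕ → X → X) : ℕ → X → X
  | 0 => id
  | n + 1 => partialComp θ n ∘ θ n

theorem partialComp_add (θ : ℕ → X → X) (a : ℕ) :
    ∀ d, partialComp θ (a + d) = partialComp θ a ∘ partialComp (fun n => θ (n + a)) d
  | 0 => rfl
  | d + 1 => by
    show partialComp θ (a + d) ∘ θ (a + d) = partialComp θ a ∘ (partialComp _ d ∘ θ (d + a))
    rw [partialComp_add θ a d, Nat.add_comm d a]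
    rfl

theorem injective_partialComp {θ : ℕ → X → X} (hθ : ∀ n, (θ n).Injective) :
    ∀ n, (partialComp θ n).Injective
  | 0 => Function.injective_id
  | n + 1 => (injective_partialComp hθ n).comp (hθ n)

theorem continuous_partialComp [TopologicalSpace X] {θ : ℕ → X → X}
    (hθ : ∀ n, Continuous (θ n)) : ∀ n, Continuous (partialComp θ n)
  | 0 => continuous_id
  | n + 1 => (continuous_partialComp hθ n).comp (hθ n)

theorem differentiable_partialComp [NormedAddCommGroup X] [NormedSpace ℂ X] {θ : ℕ → X → X}
    (hθ : ∀ n, Differentiable ℂ (θ n)) : ∀ n, Differentiable ℂ (partialComp θ n)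
  | 0 => differentiable_id
  | n + 1 => (differentiable_partialComp hθ n).comp (hθ n)

theorem norm_partialComp_sub_le [SeminormedAddCommGroup X] {θ : ℕ → X → X} {c : ℕ → ℝ} {R : ℝ}
    (hc0 : ∀ n, 0 ≤ c n) (hc : ∀ n, ∀ z ∈ closedBall 0 R, ‖θ n z - z‖ ≤ c n) :
    ∀ d (z : X), ‖z‖ + ∑ i ∈ Finset.range d, c i ≤ R →
      ‖partialComp θ d z - z‖ ≤ ∑ i ∈ Finset.range d, c i
  | 0, z, _ => by simp [partialComp]
  | d + 1, z, hz => by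
    rw [Finset.sum_range_succ] at hz ⊢
    have hsum0 : 0 ≤ ∑ i ∈ Finset.range d, c i := Finset.sum_nonneg fun i _ => hc0 i
    have hθz : ‖θ d z - z‖ ≤ c d := hc d z (mem_closedBall_zero_iff.2 (by linarith [hc0 d]))
    have hθz' : ‖θ d z‖ + ∑ i ∈ Finset.range d, c i ≤ R := by
      linarith [norm_le_norm_add_norm_sub' (θ d z) z]
    calc ‖partialComp θ d (θ d z) - z‖
        ≤ ‖partialComp θ d (θ d z) - θ d z‖ + ‖θ d z - z‖ :=
          norm_sub_le_norm_sub_add_norm_sub _ _ _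
      _ ≤ ∑ i ∈ Finset.range d, c i + c d :=
        add_le_add (norm_partialComp_sub_le hc0 hc d _ hθz') hθz

end Composition

section Displacement

variable {X : Type*} [NormedAddCommGroup X]

def SummableDisplacement (θ : ℕ → X → X) : Prop :=
  ∀ r : ℝ, ∃ c : ℕ → ℝ, Summable c ∧ ∀ n, ∀ z ∈ closedBall 0 r, ‖θ n z - z‖ ≤ c n

noncomputable def limComp (θ : ℕ → X → X) (z : X) : X :=
  limUnder atTop fun n => partialComp θ n z

theorem mem_closedBall_zero_add_of_norm_sub_le {z w : X} {r ε : ℝ} (hz : z ∈ closedBall 0 r)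
    (hw : ‖w - z‖ ≤ ε) : w ∈ closedBall 0 (r + ε) := by
  rw [mem_closedBall_zero_iff] at hz ⊢
  linarith [norm_le_norm_add_norm_sub' w z]

namespace SummableDisplacement

variable {θ : ℕ → X → X} (h : SummableDisplacement θ)
include h

theorem comp_add (a : ℕ) : SummableDisplacement fun n => θ (n + a) := fun r => by
  obtain ⟨c, hc, hθ⟩ := h r
  exact ⟨fun n => c (n + a), (summable_nat_add_iff a).2 hc, fun n => hθ (n + a)⟩

theorem eventually_norm_partialComp_sub_le (r : ℝ) {ε : ℝ} (hε : 0 < ε) :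
    ∀ᶠ a in atTop, ∀ d, ∀ z ∈ closedBall (0 : X) r,
      ‖partialComp (fun n => θ (n + a)) d z - z‖ ≤ ε := by
  obtain ⟨c, hc, hθ⟩ := h (|r| + ε)
  have hc0 : ∀ n, 0 ≤ c n := fun n =>
    (norm_nonneg _).trans (hθ n 0 (mem_closedBall_self (by positivity)))
  filter_upwards [(tendsto_sum_nat_add c).eventually (ge_mem_nhds hε)] with a ha d z hz
  have hpartial : ∑ i ∈ Finset.range d, c (i + a) ≤ ε :=
    (((summable_nat_add_iff a).2 hc).sum_le_tsum _ fun i _ => hc0 _).trans ha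
  refine (norm_partialComp_sub_le (fun n => hc0 (n + a)) (fun n => hθ (n + a)) d z ?_).trans
    hpartial
  linarith [mem_closedBall_zero_iff.1 hz, le_abs_self r]

theorem exists_eventually_norm_partialComp_le [ProperSpace X] (hθ : ∀ n, Continuous (θ n))
    (r : ℝ) : ∃ M, ∀ᶠ n in atTop, ∀ z ∈ closedBall (0 : X) r, ‖partialComp θ n z‖ ≤ M := by
  obtain ⟨a, ha⟩ := (h.eventually_norm_partialComp_sub_le r one_pos).exists
  obtain ⟨M, hM⟩ := (isCompact_closedBall (0 : X) (r + 1)).exists_bound_of_continuousOn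
    (continuous_partialComp hθ a).continuousOn
  refine ⟨M, eventually_atTop.2 ⟨a, fun n hn z hz => ?_⟩⟩
  obtain ⟨d, rfl⟩ := Nat.exists_eq_add_of_le hn
  rw [partialComp_add]
  exact hM _ (mem_closedBall_zero_add_of_norm_sub_le hz (ha d z hz))

variable [NormedSpace ℂ X] [ProperSpace X] (hθ : ∀ n, Differentiable ℂ (θ n))
include hθ

theorem uniformCauchySeqOn_partialComp (r : ℝ) :
    UniformCauchySeqOn (partialComp θ) atTop (closedBall 0 r) := by
  obtain ⟨M, hM⟩ := h.exists_eventually_norm_partialComp_le (fun n => (hθ n).continuous) (r + 2)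
  rw [Metric.uniformCauchySeqOn_iff]
  intro ε hε
  obtain ⟨δ, hδ, hMδ⟩ := exists_pos_mul_lt (half_pos hε) M
  obtain ⟨N, hN⟩ := eventually_atTop.1 (hM.and ((h.eventually_norm_partialComp_sub_le r hδ).and
    (h.eventually_norm_partialComp_sub_le r one_pos)))
  obtain ⟨hbound, hδclose, honeclose⟩ := hN N le_rfl
  -- `partialComp θ N` is `M`-Lipschitz on the ball of radius `r + 1` (Cauchy estimates), and
  -- the tails after `N` move the ball of radius `r` by at most `δ`, into that ball
  have hclose : ∀ e, ∀ z ∈ closedBall 0 r,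
      dist (partialComp θ (N + e) z) (partialComp θ N z) < ε / 2 := by
    intro e z hz
    have hM0 : 0 ≤ M :=
      (norm_nonneg _).trans (hbound z (closedBall_subset_closedBall (by linarith) hz))
    rw [partialComp_add, dist_eq_norm, Function.comp_apply]
    calc _ ≤ M / (r + 2 - (r + 1)) * ‖partialComp (fun n => θ (n + N)) e z - z‖ :=
          norm_sub_le_of_forall_mem_closedBall_norm_le (differentiable_partialComp hθ N)
            (by linarith) hbound (mem_closedBall_zero_add_of_norm_sub_le hz (honeclose e z hz))
            (closedBall_subset_closedBall (by linarith) hz)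
      _ ≤ M * δ := by
          rw [show r + 2 - (r + 1) = 1 by ring, div_one]
          exact mul_le_mul_of_nonneg_left (hδclose e z hz) hM0
      _ < ε / 2 := hMδ
  refine ⟨N, fun m hm n hn z hz => ?_⟩
  obtain ⟨e, rfl⟩ := Nat.exists_eq_add_of_le hm
  obtain ⟨e', rfl⟩ := Nat.exists_eq_add_of_le hn
  linarith [dist_triangle_right (partialComp θ (N + e) z) (partialComp θ (N + e') z)
    (partialComp θ N z), hclose e z hz, hclose e' z hz]

theorem tendstoUniformlyOn_limComp {s : Set X} (hs : Bornology.IsBounded s) :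
    TendstoUniformlyOn (partialComp θ) (limComp θ) atTop s := by
  obtain ⟨r, hr⟩ := hs.subset_closedBall 0
  have hCauchy := h.uniformCauchySeqOn_partialComp hθ r
  exact (hCauchy.tendstoUniformlyOn_of_tendsto fun z hz =>
    (hCauchy.cauchySeq hz).tendsto_limUnder).mono hr

theorem tendsto_limComp (z : X) :
    Tendsto (fun n => partialComp θ n z) atTop (𝓝 (limComp θ z)) :=
  (h.tendstoUniformlyOn_limComp hθ Bornology.isBounded_singleton).tendsto_at rfl

theorem differentiable_limComp : Differentiable ℂ (limComp θ) :=
  differentiable_of_tendstoUniformlyOn_closedBall (differentiable_partialComp hθ)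
    fun _ _ => h.tendstoUniformlyOn_limComp hθ isBounded_closedBall

theorem limComp_eq_partialComp_comp (a : ℕ) :
    limComp θ = partialComp θ a ∘ limComp fun n => θ (n + a) := by
  funext z
  refine tendsto_nhds_unique ((h.tendsto_limComp hθ z).comp
    ((tendsto_add_atTop_nat a).congr fun d => Nat.add_comm d a)) ?_
  simp only [Function.comp_def, partialComp_add]
  exact ((continuous_partialComp (fun n => (hθ n).continuous) a).tendsto _).comp
    ((h.comp_add a).tendsto_limComp (fun n => hθ (n + a)) z)

theorem injective_limComp (hinj : ∀ n, (θ n).Injective) : (limComp θ).Injective := by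
  intro z w hzw
  by_contra hne
  set δ := ‖z - w‖
  have hδ : 0 < δ := norm_pos_iff.2 (sub_ne_zero.2 hne)
  obtain ⟨a, ha⟩ := (h.eventually_norm_partialComp_sub_le (max ‖z‖ ‖w‖) (by positivity :
    0 < δ / 3)).exists
  set L := limComp fun n => θ (n + a)
  have hnear : ∀ x ∈ closedBall 0 (max ‖z‖ ‖w‖), ‖L x - x‖ ≤ δ / 3 := fun x hx =>
    le_of_tendsto (((h.comp_add a).tendsto_limComp (fun n => hθ (n + a)) x).sub_const x).norm
      (Eventually.of_forall fun d => ha d x hx)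
  have hLzw : L z = L w := by
    rw [h.limComp_eq_partialComp_comp hθ a] at hzw
    exact injective_partialComp hinj a hzw
  have hz := hnear z (mem_closedBall_zero_iff.2 (le_max_left _ _))
  have hw := hnear w (mem_closedBall_zero_iff.2 (le_max_right _ _))
  rw [hLzw] at hz
  linarith [norm_sub_le_norm_sub_add_norm_sub z (L w) w, norm_sub_rev z (L w)]

end SummableDisplacement

end Displacement

theorem thcomp_eq_partialComp {k : ℕ} (θ : ℕ → ((Fin k → ℂ) ≃ (Fin k → ℂ))) :
    ∀ n, thcomp θ n = partialComp (fun n => θ n) (n + 1)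
  | 0 => rfl
  | n + 1 => by rw [thcomp, thcomp_eq_partialComp θ n]; rfl

theorem stmt17_general (k : ℕ) (θ : ℕ → ((Fin k → ℂ) ≃ (Fin k → ℂ)))
    (hdiff : ∀ n, Differentiable ℂ (θ n))
    (hsum : ∀ m : ℕ, 1 ≤ m → ∃ c : ℕ → ℝ, Summable c ∧
      ∀ n : ℕ, ∀ z : Fin k → ℂ, ‖z‖ ≤ (m : ℝ) → ‖θ n z - z‖ ≤ c n) :
    ∃ F : (Fin k → ℂ) → (Fin k → ℂ), Function.Injective F ∧ Differentiable ℂ F ∧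
      ∀ C : Set (Fin k → ℂ), IsCompact C →
        TendstoUniformlyOn (fun n => thcomp θ n) F Filter.atTop C := by
  have h : SummableDisplacement fun n => ⇑(θ n) := fun r => by
    obtain ⟨c, hc, hθ⟩ := hsum (max 1 ⌈r⌉₊) (le_max_left _ _)
    refine ⟨c, hc, fun n z hz => hθ n z ?_⟩
    calc ‖z‖ ≤ r := mem_closedBall_zero_iff.1 hz
      _ ≤ ⌈r⌉₊ := Nat.le_ceil r
      _ ≤ (max 1 ⌈r⌉₊ : ℕ) := by exact_mod_cast le_max_right _ _
  refine ⟨limComp fun n => θ n, h.injective_limComp hdiff fun n => (θ n).injective,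
    h.differentiable_limComp hdiff, fun C hC => ?_⟩
  simpa only [thcomp_eq_partialComp] using
    (h.tendstoUniformlyOn_limComp hdiff hC.isBounded).seq_tendstoUniformlyOn (· + 1)
      (tendsto_add_atTop_nat 1)

/-- Lemma 8.3 of Dixon–Esterle: if the deviations of the automorphisms
`θ_n` from the identity are summable on every ball, then the compositions
`θ_0 ∘ ⋯ ∘ θ_n` converge locally uniformly to an injective entire map. -/
theorem stmt17 (k : ℕ) (hk : 2 ≤ k) (θ : ℕ → ((Fin k → ℂ) ≃ (Fin k → ℂ)))
    (hdiff : ∀ n, Differentiable ℂ (θ n)) (hdiffinv : ∀ n, Differentiable ℂ (θ n).symm)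
    (hsum : ∀ m : ℕ, 1 ≤ m → ∃ c : ℕ → ℝ, Summable c ∧
      ∀ n : ℕ, ∀ z : Fin k → ℂ, ‖z‖ ≤ (m : ℝ) → ‖θ n z - z‖ ≤ c n) :
    ∃ F : (Fin k → ℂ) → (Fin k → ℂ), Function.Injective F ∧ Differentiable ℂ F ∧
      ∀ C : Set (Fin k → ℂ), IsCompact C →
        TendstoUniformlyOn (fun n => thcomp θ n) F Filter.atTop C :=
  stmt17_general k θ hdiff hsum
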